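/- Let k > 0 and a > 0 be real numbers, and let R_k be the Litim regulator. Then ∫_{ℝ} dω / (ω² + a + R_k(ω)) = 2k/(k² + a) + (π − 2·arctan(k/√a))/√a. -/

import Mathlib

/-! Since `ω² + R_k(ω) = max(k², ω²)`, the integrand is even, equal to the constant `1/(k² + a)`
on `[0, k]` and to `1/(ω² + a)` beyond `k`; the tail integral is an arctangent after rescaling
`ω = √a t`. -/

open MeasureTheory Real Set

/-- The Litim regulator at scale `k`: `R_k(ω) = (k² − ω²)·θ(k² − ω²)`. -/
noncomputable def litim (k ω : ℝ) : ℝ := if ω ^ 2 < k ^ 2 then k ^ 2 - ω ^ 2 else 0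

theorem sq_add_litim (k ω : ℝ) : ω ^ 2 + litim k ω = max (k ^ 2) (ω ^ 2) := by
  unfold litim
  split_ifs with h
  · rw [max_eq_left h.le]; ring
  · rw [max_eq_right (not_lt.mp h), add_zero]

section InvSqAdd

variable {a : ℝ}

theorem one_div_sq_add_eq (ha : 0 < a) (x : ℝ) :
    1 / (x ^ 2 + a) = a⁻¹ * (1 + (x * (√a)⁻¹) ^ 2)⁻¹ := by
  have hs : √a ^ 2 = a := sq_sqrt ha.le
  have hs0 : √a ≠ 0 := (sqrt_pos.mpr ha).ne'
  field_simp
  rw [hs]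
  ring

theorem integrable_one_div_sq_add (ha : 0 < a) : Integrable fun x : ℝ ↦ 1 / (x ^ 2 + a) := by
  simp_rw [one_div_sq_add_eq ha]
  exact (integrable_inv_one_add_sq.comp_mul_right' (inv_ne_zero (sqrt_pos.mpr ha).ne')).const_mul _

theorem integral_Ioi_one_div_sq_add (ha : 0 < a) (c : ℝ) :
    ∫ x in Ioi c, 1 / (x ^ 2 + a) = (π / 2 - arctan (c / √a)) / √a := by
  have hs : 0 < √a := sqrt_pos.mpr ha
  simp_rw [one_div_sq_add_eq ha]
  rw [integral_const_mul, integral_comp_mul_right_Ioi (fun y ↦ (1 + y ^ 2)⁻¹) c (inv_pos.mpr hs),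
    integral_Ioi_inv_one_add_sq, smul_eq_mul, inv_inv, ← div_eq_mul_inv]
  field_simp
  rw [sq_sqrt ha.le]

end InvSqAdd

theorem integral_litim_propagator (k a : ℝ) (hk : 0 < k) (ha : 0 < a) :
    ∫ ω : ℝ, 1 / (ω ^ 2 + a + litim k ω) =
      2 * k / (k ^ 2 + a) + (π - 2 * arctan (k / Real.sqrt a)) / Real.sqrt a := by
  set g : ℝ → ℝ := fun t ↦ 1 / (max (k ^ 2) (t ^ 2) + a) with hg
  have h_even : (fun ω : ℝ ↦ 1 / (ω ^ 2 + a + litim k ω)) = fun ω ↦ g |ω| := by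
    ext ω
    rw [add_right_comm, sq_add_litim]
    simp only [hg, sq_abs]
  have hg_cont : Continuous g :=
    continuous_const.div (by fun_prop) fun _ ↦ by positivity
  have h_Ioc : ∫ t in (0 : ℝ)..k, g t = k / (k ^ 2 + a) := by
    rw [intervalIntegral.integral_congr (g := fun _ ↦ 1 / (k ^ 2 + a)),
      intervalIntegral.integral_const, smul_eq_mul, sub_zero, mul_one_div]
    intro t ht
    rw [uIcc_of_le hk.le] at ht
    simp only [hg, max_eq_left (pow_le_pow_left₀ ht.1 ht.2 2)]
  have h_Ioi_eq : EqOn g (fun t ↦ 1 / (t ^ 2 + a)) (Ioi k) := fun t ht ↦ by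
    simp only [hg, max_eq_right (pow_le_pow_left₀ hk.le ht.le 2)]
  have h_Ioi : ∫ t in Ioi k, g t = (π / 2 - arctan (k / √a)) / √a := by
    rw [setIntegral_congr_fun measurableSet_Ioi h_Ioi_eq, integral_Ioi_one_div_sq_add ha]
  rw [h_even, integral_comp_abs, ← intervalIntegral.integral_interval_add_Ioi'
    (hg_cont.intervalIntegrable _ _)
    ((integrable_one_div_sq_add ha).integrableOn.congr_fun h_Ioi_eq.symm measurableSet_Ioi),
    h_Ioc, h_Ioi]
  ring
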